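/- Let q be a real number with 0 < q < 1 and let x be a complex number with |x| < 1/(1−q) such that cos_q(q^k x) ≠ 0 for every integer k ≥ 0. Then the series (1−q)·∑_{k=0}^{∞} q^k x · (1 + tan_q(q^k x)·tan_q(q^{k+1} x)) converges and equals tan_q(x); that is, ∫_0^x (1 + tan_q(t)·tan_q(qt)) d_q t = tan_q(x), where tan_q(z) = sin_q(z)/cos_q(z). -/

import Mathlib

/-!
The q-difference rules `sin_q z - sin_q (q z) = (1 - q) z cos_q z` and
`cos_q z - cos_q (q z) = -(1 - q) z sin_q z` hold termwise, because
`(1 - q) [n+1]_q! = (1 - q^(n+1)) [n]_q!`. Substituting them, both `tan_q z - tan_q (q z)` and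
`(1 - q) z (1 + tan_q z tan_q (q z))` become
`(1 - q) z (sin_q² z + cos_q² z) / (cos_q z cos_q (q z))`.
So the `k`-th term of the Jackson sum is `tan_q (q^k x) - tan_q (q^(k+1) x)` and the series
telescopes; `tan_q (q^k x) → tan_q 0 = 0` by continuity of the power series on their disc of
convergence. The terms are `O(q^k)`, which gives (unconditional) convergence.
-/

open Filter Topology

/-- The `q`-basic number `[n]_q = (1 - q^n)/(1 - q)`. -/
noncomputable def qNum (q : ℝ) (n : ℕ) : ℝ := (1 - q ^ n) / (1 - q)

/-- The `q`-factorial `[n]_q! = [1]_q [2]_q ⋯ [n]_q`, with `[0]_q! = 1`. -/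
noncomputable def qFact (q : ℝ) (n : ℕ) : ℝ := ∏ j ∈ Finset.range n, qNum q (j + 1)

/-- The Gaussian binomial coefficient `[n]_q! / ([k]_q! [n-k]_q!)`. -/
noncomputable def qBinom (q : ℝ) (n k : ℕ) : ℝ := qFact q n / (qFact q k * qFact q (n - k))

/-- The `q`-exponential `e_q(z) = ∑ z^n / [n]_q!`. -/
noncomputable def qExp (q : ℝ) (z : ℂ) : ℂ := ∑' n : ℕ, z ^ n / (qFact q n : ℂ)

/-- The `q`-sine `sin_q(z) = ∑ (-1)^n z^(2n+1) / [2n+1]_q!`. -/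
noncomputable def qSin (q : ℝ) (z : ℂ) : ℂ :=
  ∑' n : ℕ, (-1 : ℂ) ^ n * z ^ (2 * n + 1) / (qFact q (2 * n + 1) : ℂ)

/-- The `q`-cosine `cos_q(z) = ∑ (-1)^n z^(2n) / [2n]_q!`. -/
noncomputable def qCos (q : ℝ) (z : ℂ) : ℂ :=
  ∑' n : ℕ, (-1 : ℂ) ^ n * z ^ (2 * n) / (qFact q (2 * n) : ℂ)

/-- The `q`-addition power `(x ⊕_q y)^n = ∑_{k=0}^n binom_q(n,k) x^k y^(n-k)`. -/
noncomputable def qAddPow (q : ℝ) (x y : ℂ) (n : ℕ) : ℂ :=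
  ∑ k ∈ Finset.range (n + 1), (qBinom q n k : ℂ) * x ^ k * y ^ (n - k)

/-- The `q`-subtraction power `(x ⊖_q y)^n = ∑_{k=0}^n binom_q(n,k) (-1)^(n-k) x^k y^(n-k)`. -/
noncomputable def qSubPow (q : ℝ) (x y : ℂ) (n : ℕ) : ℂ :=
  ∑ k ∈ Finset.range (n + 1), (qBinom q n k : ℂ) * (-1 : ℂ) ^ (n - k) * x ^ k * y ^ (n - k)

/-- The `q`-tangent `tan_q(z) = sin_q(z)/cos_q(z)`. -/
noncomputable def qTan (q : ℝ) (z : ℂ) : ℂ := qSin q z / qCos q z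

/-- The second `q`-exponential `E_q(z) = ∑ q^(n(n-1)/2) z^n / [n]_q!`. -/
noncomputable def qExpE (q : ℝ) (z : ℂ) : ℂ :=
  ∑' n : ℕ, (q : ℂ) ^ (n * (n - 1) / 2) * z ^ n / (qFact q n : ℂ)

theorem hasSum_sub_succ_of_tendsto {G : Type*} [AddCommGroup G] [TopologicalSpace G]
    [IsTopologicalAddGroup G] [T2Space G] {f : ℕ → G} {l : G} (hf : Tendsto f atTop (𝓝 l))
    (hs : Summable fun n => f n - f (n + 1)) : HasSum (fun n => f n - f (n + 1)) (f 0 - l) := by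
  convert hs.hasSum
  refine tendsto_nhds_unique (tendsto_const_nhds.sub hf) ?_
  simpa only [Finset.sum_range_sub'] using hs.hasSum.tendsto_sum_nat

theorem summable_mul_geometric_of_tendsto {R : Type*} [NormedRing R] [NormOneClass R]
    [NormMulClass R] [CompleteSpace R] {u : ℕ → R} {c : R} (hu : Tendsto u atTop (𝓝 c))
    {r : R} (hr : ‖r‖ < 1) : Summable fun n => u n * r ^ n :=
  .of_norm <| summable_norm_mul_geometric_of_norm_lt_one' (k := 0) hr <| by
    simpa using hu.isBigO_one R

section
variable {q : ℝ}

theorem qNum_eq_geom_sum (hq : q ≠ 1) (n : ℕ) : qNum q n = ∑ i ∈ Finset.range n, q ^ i := by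
  rw [qNum, geom_sum_eq hq, ← neg_div_neg_eq, neg_sub, neg_sub]

theorem one_le_qNum_succ (hq0 : 0 ≤ q) (hq1 : q ≠ 1) (n : ℕ) : 1 ≤ qNum q (n + 1) := by
  rw [qNum_eq_geom_sum hq1, Finset.sum_range_succ', pow_zero, le_add_iff_nonneg_left]
  positivity

theorem qFact_pos (hq0 : 0 ≤ q) (hq1 : q ≠ 1) (n : ℕ) : 0 < qFact q n :=
  zero_lt_one.trans_le <| Finset.one_le_prod fun j _ => one_le_qNum_succ hq0 hq1 j

theorem qFact_succ (n : ℕ) : qFact q (n + 1) = qFact q n * qNum q (n + 1) :=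
  Finset.prod_range_succ _ _

theorem tendsto_qNum (hq : |q| < 1) : Tendsto (qNum q) atTop (𝓝 (1 / (1 - q))) := by
  have h := ((tendsto_pow_atTop_nhds_zero_of_abs_lt_one hq).const_sub 1).div_const (1 - q)
  rwa [sub_zero] at h

theorem summable_pow_div_qFact (hq0 : 0 ≤ q) (hq1 : q < 1) {r : ℝ} (hr : |r| < 1 / (1 - q)) :
    Summable fun n => r ^ n / qFact q n := by
  obtain ⟨s, hrs, hs⟩ := exists_between hr
  have hs0 : 0 < s := (abs_nonneg r).trans_lt hrs
  have hNum : ∀ᶠ n in atTop, s < qNum q (n + 1) :=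
    tendsto_add_atTop_nat 1 |>.eventually <|
      (tendsto_qNum (abs_lt.2 ⟨by linarith, hq1⟩)).eventually (lt_mem_nhds hs)
  refine summable_of_ratio_norm_eventually_le ((div_lt_one hs0).2 hrs) ?_
  filter_upwards [hNum] with n hn
  have hF := qFact_pos hq0 hq1.ne n
  calc ‖r ^ (n + 1) / qFact q (n + 1)‖ = |r| / qNum q (n + 1) * ‖r ^ n / qFact q n‖ := by
        rw [qFact_succ, pow_succ, norm_div, norm_div, norm_mul, Real.norm_of_nonneg hF.le,
          Real.norm_of_nonneg (mul_pos hF (by linarith)).le, Real.norm_eq_abs r]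
        ring
    _ ≤ |r| / s * ‖r ^ n / qFact q n‖ := by gcongr

theorem norm_neg_one_pow_mul_pow_div_qFact (hq0 : 0 ≤ q) (hq1 : q ≠ 1) (z : ℂ) (m p : ℕ) :
    ‖(-1 : ℂ) ^ m * z ^ p / (qFact q p : ℂ)‖ = ‖z‖ ^ p / qFact q p := by
  rw [norm_div, norm_mul, norm_pow, norm_pow, norm_neg, norm_one, one_pow, one_mul,
    Complex.norm_real, Real.norm_of_nonneg (qFact_pos hq0 hq1 p).le]

theorem norm_ofReal_mul_le (hq0 : 0 ≤ q) (hq1 : q ≤ 1) (z : ℂ) :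
    ‖(q : ℂ) * z‖ ≤ ‖z‖ := by
  rw [norm_mul, Complex.norm_real, Real.norm_of_nonneg hq0]
  exact mul_le_of_le_one_left (norm_nonneg z) hq1

theorem qSin_zero : qSin q 0 = 0 := by
  simp [qSin]

theorem qCos_zero : qCos q 0 = 1 := by
  rw [qCos, tsum_eq_single 0 fun m hm => by simp [hm]]
  simp [qFact]

variable (hq0 : 0 ≤ q) (hq1 : q < 1)
include hq0 hq1

theorem summable_neg_one_pow_mul_pow_div_qFact {e : ℕ → ℕ} (he : e.Injective) {z : ℂ}
    (hz : ‖z‖ < 1 / (1 - q)) :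
    Summable fun m => (-1 : ℂ) ^ m * z ^ e m / (qFact q (e m) : ℂ) := by
  refine .of_norm ?_
  simp only [norm_neg_one_pow_mul_pow_div_qFact hq0 hq1.ne]
  exact (summable_pow_div_qFact hq0 hq1 (by rwa [abs_norm])).comp_injective he

theorem continuousOn_tsum_neg_one_pow_mul_pow_div_qFact {e : ℕ → ℕ} (he : e.Injective) :
    ContinuousOn (fun z : ℂ => ∑' m, (-1 : ℂ) ^ m * z ^ e m / (qFact q (e m) : ℂ))
      (Metric.ball 0 (1 / (1 - q))) := by
  intro z hz
  obtain ⟨r, hzr, hr⟩ := exists_between (mem_ball_zero_iff.1 hz)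
  have hr0 : 0 ≤ r := (norm_nonneg z).trans hzr.le
  have hcont : ContinuousOn
      (fun w : ℂ => ∑' m, (-1 : ℂ) ^ m * w ^ e m / (qFact q (e m) : ℂ))
      (Metric.closedBall 0 r) := by
    refine continuousOn_tsum (fun m => by fun_prop)
      ((summable_pow_div_qFact hq0 hq1 (by rwa [abs_of_nonneg hr0])).comp_injective he)
      fun m w hw => ?_
    rw [norm_neg_one_pow_mul_pow_div_qFact hq0 hq1.ne]
    exact div_le_div_of_nonneg_right (pow_le_pow_left₀ (norm_nonneg w)
      (mem_closedBall_zero_iff.1 hw) _) (qFact_pos hq0 hq1.ne _).le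
  exact (hcont.continuousAt (Metric.closedBall_mem_nhds_of_mem (mem_ball_zero_iff.2 hzr)))
    |>.continuousWithinAt

theorem hasSum_qSin {z : ℂ} (hz : ‖z‖ < 1 / (1 - q)) :
    HasSum (fun m => (-1 : ℂ) ^ m * z ^ (2 * m + 1) / (qFact q (2 * m + 1) : ℂ)) (qSin q z) :=
  (summable_neg_one_pow_mul_pow_div_qFact hq0 hq1
    (fun a b h => by simpa using h) hz).hasSum

theorem hasSum_qCos {z : ℂ} (hz : ‖z‖ < 1 / (1 - q)) :
    HasSum (fun m => (-1 : ℂ) ^ m * z ^ (2 * m) / (qFact q (2 * m) : ℂ)) (qCos q z) :=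
  (summable_neg_one_pow_mul_pow_div_qFact hq0 hq1
    (fun a b h => by simpa using h) hz).hasSum

theorem continuousOn_qSin : ContinuousOn (qSin q) (Metric.ball 0 (1 / (1 - q))) :=
  continuousOn_tsum_neg_one_pow_mul_pow_div_qFact hq0 hq1 fun a b h => by simpa using h

theorem continuousOn_qCos : ContinuousOn (qCos q) (Metric.ball 0 (1 / (1 - q))) :=
  continuousOn_tsum_neg_one_pow_mul_pow_div_qFact hq0 hq1 fun a b h => by simpa using h

theorem tendsto_qTan_nhds_zero : Tendsto (qTan q) (𝓝 0) (𝓝 0) := by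
  have h0 : (0 : ℂ) ∈ Metric.ball 0 (1 / (1 - q)) := Metric.mem_ball_self (by
    have : 0 < 1 - q := by linarith
    positivity)
  have hsin := (continuousOn_qSin hq0 hq1).continuousAt (Metric.isOpen_ball.mem_nhds h0)
  have hcos := (continuousOn_qCos hq0 hq1).continuousAt (Metric.isOpen_ball.mem_nhds h0)
  have h := hsin.tendsto.div hcos.tendsto (by rw [qCos_zero]; exact one_ne_zero)
  rwa [qSin_zero, qCos_zero, zero_div] at h

theorem pow_succ_div_qFact_sub (z : ℂ) (n : ℕ) :
    z ^ (n + 1) / (qFact q (n + 1) : ℂ) - (q * z) ^ (n + 1) / (qFact q (n + 1) : ℂ) =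
      (1 - q) * z * (z ^ n / (qFact q n : ℂ)) := by
  have hF : (qFact q n : ℂ) ≠ 0 := by exact_mod_cast (qFact_pos hq0 hq1.ne n).ne'
  have hq : (1 - q : ℂ) ≠ 0 := by exact_mod_cast (sub_pos.2 hq1).ne'
  have hN : (1 - q ^ (n + 1) : ℂ) ≠ 0 := by
    exact_mod_cast (sub_pos.2 (pow_lt_one₀ hq0 hq1 n.succ_ne_zero)).ne'
  rw [qFact_succ, qNum]
  push_cast
  field_simp
  ring

theorem qSin_sub_qSin_mul {z : ℂ} (hz : ‖z‖ < 1 / (1 - q)) :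
    qSin q z - qSin q (q * z) = (1 - q) * z * qCos q z := by
  have hqz := (norm_ofReal_mul_le hq0 hq1.le z).trans_lt hz
  refine ((hasSum_qSin hq0 hq1 hz).sub (hasSum_qSin hq0 hq1 hqz)).unique
    (((hasSum_qCos hq0 hq1 hz).mul_left _).congr_fun fun m => ?_)
  rw [mul_div_assoc, mul_div_assoc, ← mul_sub, pow_succ_div_qFact_sub hq0 hq1, mul_div_assoc]
  ring

theorem qCos_sub_qCos_mul {z : ℂ} (hz : ‖z‖ < 1 / (1 - q)) :
    qCos q z - qCos q (q * z) = -((1 - q) * z * qSin q z) := by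
  have hqz := (norm_ofReal_mul_le hq0 hq1.le z).trans_lt hz
  have h := (hasSum_qCos hq0 hq1 hz).sub (hasSum_qCos hq0 hq1 hqz)
  rw [← hasSum_nat_add_iff' 1] at h
  simp only [Finset.sum_range_one, mul_zero, pow_zero, sub_self, sub_zero] at h
  refine (h.unique (((hasSum_qSin hq0 hq1 hz).mul_left _).congr_fun fun m => ?_)).trans
    (neg_mul _ _)
  rw [mul_div_assoc, mul_div_assoc, ← mul_sub, show 2 * (m + 1) = 2 * m + 1 + 1 by ring,
    pow_succ_div_qFact_sub hq0 hq1, mul_div_assoc]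
  ring

theorem qTan_sub_qTan_mul {z : ℂ} (hz : ‖z‖ < 1 / (1 - q)) (hc : qCos q z ≠ 0)
    (hc' : qCos q (q * z) ≠ 0) :
    qTan q z - qTan q (q * z) = (1 - q) * z * (1 + qTan q z * qTan q (q * z)) := by
  have hs := qSin_sub_qSin_mul hq0 hq1 hz
  have hc'' := qCos_sub_qCos_mul hq0 hq1 hz
  rw [qTan, qTan, div_sub_div _ _ hc hc', div_mul_div_comm, one_add_div (mul_ne_zero hc hc'),
    mul_div_assoc', div_left_inj' (mul_ne_zero hc hc')]
  -- both sides reduce to `(1 - q) z (sin_q² z + cos_q² z)`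
  linear_combination (qCos q z + (1 - q) * z * qSin q z) * hs +
    ((1 - q) * z * qCos q z - qSin q z) * hc''
end

/-- `∫_0^x (1 + tan_q(t) tan_q(qt)) d_q t = tan_q(x)`. -/
theorem jackson_integral_qTan (q : ℝ) (hq0 : 0 < q) (hq1 : q < 1) (x : ℂ)
    (hx : ‖x‖ < 1 / (1 - q))
    (hc : ∀ k : ℕ, qCos q ((q : ℂ) ^ k * x) ≠ 0) :
    HasSum
      (fun k : ℕ =>
        (1 - (q : ℂ)) * ((q : ℂ) ^ k * x) *
          (1 + qTan q ((q : ℂ) ^ k * x) * qTan q ((q : ℂ) ^ (k + 1) * x)))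
      (qTan q x) := by
  have hq : ‖(q : ℂ)‖ < 1 := by rwa [Complex.norm_real, Real.norm_of_nonneg hq0.le]
  have hnorm : ∀ k : ℕ, ‖(q : ℂ) ^ k * x‖ < 1 / (1 - q) := fun k => by
    rw [norm_mul, norm_pow]
    exact (mul_le_of_le_one_left (norm_nonneg x) (pow_le_one₀ (norm_nonneg _) hq.le)).trans_lt hx
  have hsucc : ∀ k : ℕ, (q : ℂ) ^ (k + 1) * x = q * ((q : ℂ) ^ k * x) := fun k => by ring
  have htan : Tendsto (fun k => qTan q ((q : ℂ) ^ k * x)) atTop (𝓝 0) :=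
    (tendsto_qTan_nhds_zero hq0.le hq1).comp <| by
      simpa using (tendsto_pow_atTop_nhds_zero_of_norm_lt_one hq).mul_const x
  have hterm : ∀ k : ℕ, (1 - (q : ℂ)) * ((q : ℂ) ^ k * x) *
      (1 + qTan q ((q : ℂ) ^ k * x) * qTan q ((q : ℂ) ^ (k + 1) * x)) =
        qTan q ((q : ℂ) ^ k * x) - qTan q ((q : ℂ) ^ (k + 1) * x) := fun k => by
    rw [hsucc]
    exact (qTan_sub_qTan_mul hq0.le hq1 (hnorm k) (hc k) (hsucc k ▸ hc (k + 1))).symm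
  have hsum := (summable_mul_geometric_of_tendsto
    ((htan.mul (htan.comp (tendsto_add_atTop_nat 1))).const_add 1) hq).mul_left ((1 - q) * x)
  rw [funext hterm]
  have := hasSum_sub_succ_of_tendsto htan <|
    hsum.congr fun k => by rw [← hterm, Function.comp_apply]; ring
  rwa [pow_zero, one_mul, sub_zero] at this
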